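/- Let P ∈ ℝ^{n×n} be symmetric positive definite, Σ ∈ ℝ^{n×n}, and ε, ϑ > 0 with Σ + Σᵀ + ϑ·I ⪯ -ε·P⁻¹. Let B ∈ ℝ^{n×m}. Then for all z ∈ ℝⁿ and v ∈ ℝᵐ: 2·zᵀ P Σ P z + 2·zᵀ P B v ≤ -ε·zᵀ P z + (‖B‖²/ϑ)·|v|². -/

import Mathlib

/-
With `w = P z` the quadratic forms in `z` become forms in `w`: `zᵀ P Σ P z = wᵀ Σ w`,
`zᵀ P B v = wᵀ B v` and `zᵀ P z = wᵀ P⁻¹ w`. Testing the Loewner inequality against `w` gives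
`2 wᵀ Σ w + ϑ |w|² ≤ -ε wᵀ P⁻¹ w`, and Young's inequality with weight `ϑ` gives
`2 wᵀ B v ≤ ϑ |w|² + (‖B‖² / ϑ) |v|²`; adding the two cancels `ϑ |w|²`.
-/

open Matrix

/-- The induced 2-norm (operator norm) of a real matrix. -/
noncomputable def l2OpNorm {n m : ℕ} (B : Matrix (Fin n) (Fin m) ℝ) : ℝ :=
  ‖(Matrix.toEuclideanLin B).toContinuousLinearMap‖

theorem ContinuousLinearMap.two_mul_inner_apply_le {E F : Type*} [NormedAddCommGroup E]
    [NormedSpace ℝ E] [NormedAddCommGroup F] [InnerProductSpace ℝ F] (f : E →L[ℝ] F)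
    (w : F) (v : E) {ϑ : ℝ} (hϑ : 0 < ϑ) :
    2 * inner ℝ w (f v) ≤ ϑ * ‖w‖ ^ 2 + ‖f‖ ^ 2 / ϑ * ‖v‖ ^ 2 :=
  calc 2 * inner ℝ w (f v) ≤ 2 * ‖w‖ * (‖f‖ * ‖v‖) := by
        rw [mul_assoc]
        gcongr
        exact (real_inner_le_norm _ _).trans (by gcongr; exact f.le_opNorm v)
    _ ≤ ϑ * ‖w‖ ^ 2 + ϑ⁻¹ * (‖f‖ * ‖v‖) ^ 2 := two_mul_le_add_mul_sq hϑ
    _ = ϑ * ‖w‖ ^ 2 + ‖f‖ ^ 2 / ϑ * ‖v‖ ^ 2 := by ring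

theorem EuclideanSpace.norm_toLp_sq {ι : Type*} [Fintype ι] (x : ι → ℝ) :
    ‖WithLp.toLp 2 x‖ ^ 2 = x ⬝ᵥ x := by
  rw [← real_inner_self_eq_norm_sq, EuclideanSpace.inner_toLp_toLp, star_trivial]

theorem Matrix.two_mul_dotProduct_mulVec_le {n m : ℕ} (B : Matrix (Fin n) (Fin m) ℝ)
    (w : Fin n → ℝ) (v : Fin m → ℝ) {ϑ : ℝ} (hϑ : 0 < ϑ) :
    2 * (w ⬝ᵥ (B *ᵥ v)) ≤ ϑ * (w ⬝ᵥ w) + l2OpNorm B ^ 2 / ϑ * (v ⬝ᵥ v) := by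
  have h := (Matrix.toEuclideanLin B).toContinuousLinearMap.two_mul_inner_apply_le
    (WithLp.toLp 2 w) (WithLp.toLp 2 v) hϑ
  rw [EuclideanSpace.norm_toLp_sq, EuclideanSpace.norm_toLp_sq] at h
  rwa [dotProduct_comm]

section QuadraticForm

variable {ι R : Type*} [Fintype ι]

theorem Matrix.IsSymm.dotProduct_mulVec_comm [CommSemiring R] {P : Matrix ι ι R}
    (hP : P.IsSymm) (x y : ι → R) : x ⬝ᵥ (P *ᵥ y) = (P *ᵥ x) ⬝ᵥ y := by
  rw [← hP.eq, dotProduct_transpose_mulVec, dotProduct_comm, hP.eq]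

theorem Matrix.dotProduct_add_transpose_mulVec [CommSemiring R] (A : Matrix ι ι R)
    (x : ι → R) : x ⬝ᵥ ((A + Aᵀ) *ᵥ x) = 2 * (x ⬝ᵥ (A *ᵥ x)) := by
  rw [add_mulVec, dotProduct_add, dotProduct_transpose_mulVec, two_mul]

theorem Matrix.dotProduct_mulVec_le_of_posSemidef_sub {A C : Matrix ι ι ℝ}
    (h : (C - A).PosSemidef) (x : ι → ℝ) : x ⬝ᵥ (A *ᵥ x) ≤ x ⬝ᵥ (C *ᵥ x) := by
  have := h.dotProduct_mulVec_nonneg x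
  rw [star_trivial, sub_mulVec, dotProduct_sub] at this
  linarith

end QuadraticForm

theorem stmt_10_general {n m : ℕ} (P S : Matrix (Fin n) (Fin n) ℝ)
    (hP : P.PosDef) (hPsymm : P.IsSymm) (ε ϑ : ℝ) (hϑ : 0 < ϑ)
    (hLoewner : ((-ε) • P⁻¹ - (S + Sᵀ + ϑ • (1 : Matrix (Fin n) (Fin n) ℝ))).PosSemidef)
    (B : Matrix (Fin n) (Fin m) ℝ) :
    ∀ (z : Fin n → ℝ) (v : Fin m → ℝ),
      2 * (z ⬝ᵥ (P *ᵥ (S *ᵥ (P *ᵥ z)))) + 2 * (z ⬝ᵥ (P *ᵥ (B *ᵥ v)))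
        ≤ -ε * (z ⬝ᵥ (P *ᵥ z)) + (l2OpNorm B ^ 2 / ϑ) * (v ⬝ᵥ v) := by
  intro z v
  have hzPz : z ⬝ᵥ (P *ᵥ z) = (P *ᵥ z) ⬝ᵥ (P⁻¹ *ᵥ (P *ᵥ z)) := by
    rw [mulVec_mulVec, nonsing_inv_mul _ ((isUnit_iff_isUnit_det P).mp hP.isUnit), one_mulVec,
      dotProduct_comm]
  rw [hzPz, hPsymm.dotProduct_mulVec_comm z, hPsymm.dotProduct_mulVec_comm z]
  set w := P *ᵥ z
  have hLoewner_w := dotProduct_mulVec_le_of_posSemidef_sub hLoewner w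
  rw [add_mulVec, dotProduct_add, dotProduct_add_transpose_mulVec, smul_mulVec, one_mulVec,
    dotProduct_smul, smul_mulVec, dotProduct_smul, smul_eq_mul, smul_eq_mul] at hLoewner_w
  linarith [two_mul_dotProduct_mulVec_le B w v hϑ]

/-- key dissipation inequality of Theorem 2: if
`Σ + Σᵀ + ϑ I ⪯ -ε P⁻¹` with `P` symmetric positive definite, then
`2 zᵀ P Σ P z + 2 zᵀ P B v ≤ -ε zᵀ P z + (‖B‖²/ϑ) |v|²`. -/
theorem stmt_10 {n m : ℕ} (P S : Matrix (Fin n) (Fin n) ℝ)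
    (hP : P.PosDef) (hPsymm : P.IsSymm) (ε ϑ : ℝ) (hε : 0 < ε) (hϑ : 0 < ϑ)
    (hLoewner : ((-ε) • P⁻¹ - (S + Sᵀ + ϑ • (1 : Matrix (Fin n) (Fin n) ℝ))).PosSemidef)
    (B : Matrix (Fin n) (Fin m) ℝ) :
    ∀ (z : Fin n → ℝ) (v : Fin m → ℝ),
      2 * (z ⬝ᵥ (P *ᵥ (S *ᵥ (P *ᵥ z)))) + 2 * (z ⬝ᵥ (P *ᵥ (B *ᵥ v)))
        ≤ -ε * (z ⬝ᵥ (P *ᵥ z)) + (l2OpNorm B ^ 2 / ϑ) * (v ⬝ᵥ v) :=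
  stmt_10_general P S hP hPsymm ε ϑ hϑ hLoewner B
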